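/- arXiv:2508.12849 — 2 statements merged into one kernel-verified Lean document; each statement's English description precedes it below -/
import Mathlib

section
/- Let G be a finite group generated by involutions g₀,…,g_d, p ∈ (0,1), and define Tᵢ(P) = P·(p·1 + (1−p)·gᵢ) on ℝ[G]. Suppose a finite sequence (ι₁,…,ι_m) of indices contains every index in {0,…,d} at least once. Then there exists a constant c < 1 such that ‖T_{ι_m}⋯T_{ι_1} P‖ ≤ c‖P‖ for every P ∈ ℝ[G] orthogonal to the uniform element 𝟙. -/
/-!
Each step `P ↦ P·(p + (1-p)g)` loses exactly `p(1-p) ∑_w (P w - P (w g))²` of squared norm, so it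
is a contraction whose norm-preserving vectors are the `g`-invariant ones. A vector whose norm
survives the whole product is therefore invariant under every generator, hence constant, hence
zero when orthogonal to `𝟙`. So the product strictly shrinks every nonzero vector of `𝟙ᗮ`, and
compactness of the unit ball of this finite-dimensional space makes the contraction uniform.
-/

open scoped RealInnerProductSpace

theorem exists_lt_one_norm_le_of_norm_lt {E : Type*} [NormedAddCommGroup E] [NormedSpace ℝ E]
    [FiniteDimensional ℝ E] (A : E →ₗ[ℝ] E) (V : Submodule ℝ E)
    (hA : ∀ x ∈ V, x ≠ 0 → ‖A x‖ < ‖x‖) : ∃ c < 1, ∀ x ∈ V, ‖A x‖ ≤ c * ‖x‖ := by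
  have hK : IsCompact ((V : Set E) ∩ Metric.closedBall 0 1) :=
    (ProperSpace.isCompact_closedBall 0 1).inter_left V.closed_of_finiteDimensional
  obtain ⟨x₀, ⟨hx₀V, hx₀⟩, hmax⟩ := hK.exists_isMaxOn ⟨0, V.zero_mem, by simp⟩
    (A.continuous_of_finiteDimensional.norm.continuousOn)
  refine ⟨‖A x₀‖, ?_, fun x hxV => ?_⟩
  · rcases eq_or_ne x₀ 0 with rfl | hx₀0
    · simp
    · exact (hA x₀ hx₀V hx₀0).trans_le (mem_closedBall_zero_iff.1 hx₀)
  rcases eq_or_ne x 0 with rfl | hx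
  · simp
  have hxn : ‖x‖ ≠ 0 := norm_ne_zero_iff.2 hx
  have hunit : ‖x‖⁻¹ • x ∈ (V : Set E) ∩ Metric.closedBall 0 1 :=
    ⟨V.smul_mem _ hxV, by simp [norm_smul, hxn]⟩
  calc ‖A x‖ = ‖x‖ * ‖A (‖x‖⁻¹ • x)‖ := by
        rw [map_smul, norm_smul, norm_inv, norm_norm, mul_inv_cancel_left₀ hxn]
    _ ≤ ‖x‖ * ‖A x₀‖ := mul_le_mul_of_nonneg_left (hmax hunit) (norm_nonneg _)
    _ = ‖A x₀‖ * ‖x‖ := mul_comm _ _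

section Foldl

variable {ι E : Type*}

theorem exists_linearMap_foldl {R : Type*} [Semiring R] [AddCommMonoid E] [Module R E]
    (T : ι → E →ₗ[R] E) (l : List ι) :
    ∃ A : E →ₗ[R] E, ∀ x, l.foldl (fun y i => T i y) x = A x := by
  induction l with
  | nil => exact ⟨LinearMap.id, fun _ => rfl⟩
  | cons i t ih =>
    obtain ⟨A, hA⟩ := ih
    exact ⟨A ∘ₗ T i, fun x => hA (T i x)⟩

variable [SeminormedAddCommGroup E] (f : ι → E → E) (hle : ∀ i x, ‖f i x‖ ≤ ‖x‖)
include hle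

theorem norm_foldl_le (l : List ι) (x : E) : ‖l.foldl (fun y i => f i y) x‖ ≤ ‖x‖ := by
  induction l generalizing x with
  | nil => rfl
  | cons i t ih => exact (ih (f i x)).trans (hle i x)

theorem eq_self_of_norm_foldl_eq (hfix : ∀ i x, ‖f i x‖ = ‖x‖ → f i x = x) (l : List ι) (x : E)
    (h : ‖l.foldl (fun y i => f i y) x‖ = ‖x‖) : ∀ i ∈ l, f i x = x := by
  induction l with
  | nil => simp
  | cons i t ih =>
    have hi : f i x = x := hfix i x <| le_antisymm (hle i x) <|
      h.symm.le.trans (norm_foldl_le f hle t (f i x))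
    rw [List.foldl_cons, hi] at h
    simpa [hi] using ih h

end Foldl

section LazyStep

variable {G : Type*} [Group G] {p : ℝ} {h : G} {T : EuclideanSpace ℝ G → EuclideanSpace ℝ G}
  (hT : ∀ P w, T P w = p * P w + (1 - p) * P (w * h))
include hT

theorem norm_sq_lazy_step [Fintype G] (P : EuclideanSpace ℝ G) :
    ‖T P‖ ^ 2 = ‖P‖ ^ 2 - p * (1 - p) * ∑ w, (P w - P (w * h)) ^ 2 := by
  have hshift : ∑ w, P (w * h) ^ 2 = ∑ w, P w ^ 2 :=
    Equiv.sum_comp (Equiv.mulRight h) (fun w => P w ^ 2)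
  simp only [EuclideanSpace.norm_sq_eq, Real.norm_eq_abs, sq_abs, hT, Finset.mul_sum,
    ← Finset.sum_sub_distrib]
  -- the difference is `(1-p) ∑_w (P (w h)² - P w²)`, which vanishes by `hshift`
  have hzero : (1 - p) * ∑ w, (P (w * h) ^ 2 - P w ^ 2) = 0 := by
    rw [Finset.sum_sub_distrib, hshift, sub_self, mul_zero]
  rw [← sub_eq_zero, ← Finset.sum_sub_distrib, ← hzero, Finset.mul_sum]
  exact Finset.sum_congr rfl fun w _ => by ring

theorem norm_lazy_step_le [Fintype G] (hp : p ∈ Set.Icc (0 : ℝ) 1) (P : EuclideanSpace ℝ G) :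
    ‖T P‖ ≤ ‖P‖ := by
  refine pow_le_pow_iff_left₀ (norm_nonneg _) (norm_nonneg _) two_ne_zero |>.1 ?_
  rw [norm_sq_lazy_step hT]
  have : 0 ≤ p * (1 - p) * ∑ w, (P w - P (w * h)) ^ 2 :=
    mul_nonneg (mul_nonneg hp.1 (sub_nonneg.2 hp.2)) (Finset.sum_nonneg fun w _ => sq_nonneg _)
  linarith

theorem lazy_step_invariant_of_norm_eq [Fintype G] (hp : p ∈ Set.Ioo (0 : ℝ) 1)
    {P : EuclideanSpace ℝ G} (hP : ‖T P‖ = ‖P‖) (w : G) :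
    P (w * h) = P w := by
  have hsum : p * (1 - p) * ∑ w, (P w - P (w * h)) ^ 2 = 0 := by
    have := norm_sq_lazy_step hT P
    rw [hP] at this
    linarith
  have hpos : p * (1 - p) ≠ 0 := (mul_pos hp.1 (sub_pos.2 hp.2)).ne'
  have hw := (Finset.sum_eq_zero_iff_of_nonneg fun w _ => sq_nonneg (P w - P (w * h))).1
    ((mul_eq_zero.1 hsum).resolve_left hpos) w (Finset.mem_univ w)
  exact (sub_eq_zero.1 (pow_eq_zero_iff two_ne_zero |>.1 hw)).symm

theorem lazy_step_eq_self_iff (hp : p ≠ 1) {P : EuclideanSpace ℝ G} :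
    T P = P ↔ ∀ w, P (w * h) = P w := by
  refine ⟨fun hfix w => ?_, fun hP => ?_⟩
  · have hw := congrArg (· w) hfix
    simp only [hT] at hw
    have : (1 - p) * (P (w * h) - P w) = 0 := by linarith
    exact sub_eq_zero.1 ((mul_eq_zero.1 this).resolve_left (sub_ne_zero.2 hp.symm))
  · ext w
    rw [hT, hP]
    ring

end LazyStep

theorem apply_eq_apply_one_of_mul_right_invariant {G α : Type*} [Group G] {S : Set G}
    (hS : Subgroup.closure S = ⊤) {f : G → α} (hf : ∀ s ∈ S, ∀ w, f (w * s) = f w) (w : G) :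
    f w = f 1 := by
  have key : ∀ x ∈ Subgroup.closure S, ∀ w, f (w * x) = f w := fun x hx =>
    Subgroup.closure_induction (fun s hs => hf s hs) (fun w => by rw [mul_one])
      (fun x y _ _ hx hy w => by rw [← mul_assoc, hy, hx])
      (fun x _ hx w => by rw [← hx (w * x⁻¹), inv_mul_cancel_right]) hx
  simpa using key w (hS ▸ Subgroup.mem_top w) 1

theorem eq_zero_of_const_of_inner_uniform_eq_zero {G : Type*} [Fintype G]
    {P : EuclideanSpace ℝ G} {a : G} (hconst : ∀ w, P w = P a)
    (hP : ⟪P, (WithLp.toLp 2 (fun _ => 1 / (Fintype.card G : ℝ)) : EuclideanSpace ℝ G)⟫ = 0) :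
    P = 0 := by
  have hcard : (Fintype.card G : ℝ) ≠ 0 := by
    have : Nonempty G := ⟨a⟩
    exact_mod_cast Fintype.card_ne_zero
  simp only [PiLp.inner_apply, RCLike.inner_apply, conj_trivial, hconst, Finset.sum_const,
    Finset.card_univ, nsmul_eq_mul] at hP
  field_simp at hP
  ext w
  rw [hconst, hP]
  rfl

theorem stmt3_general (G : Type) [Group G] [Fintype G]
    (d m : ℕ) (g : Fin (d + 1) → G)
    (hgen : Subgroup.closure (Set.range g) = ⊤)
    (p : ℝ) (hp : p ∈ Set.Ioo (0 : ℝ) 1)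
    (T : Fin (d + 1) → EuclideanSpace ℝ G →ₗ[ℝ] EuclideanSpace ℝ G)
    (hT : ∀ i (P : EuclideanSpace ℝ G) (w : G),
      T i P w = p * P w + (1 - p) * P (w * g i))
    (ι : Fin m → Fin (d + 1)) (hι : Function.Surjective ι) :
    ∃ c : ℝ, c < 1 ∧ ∀ P : EuclideanSpace ℝ G,
      ⟪P, (WithLp.toLp 2 (fun _ => 1 / (Fintype.card G : ℝ)) : EuclideanSpace ℝ G)⟫ = 0 →
      ‖(List.ofFn ι).foldl (fun Q i => T i Q) P‖ ≤ c * ‖P‖ := by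
  set u : EuclideanSpace ℝ G := WithLp.toLp 2 (fun _ => 1 / (Fintype.card G : ℝ))
  obtain ⟨A, hA⟩ := exists_linearMap_foldl T (List.ofFn ι)
  have hle : ∀ i P, ‖T i P‖ ≤ ‖P‖ := fun i =>
    norm_lazy_step_le (hT i) (Set.Ioo_subset_Icc_self hp)
  have hfix : ∀ i P, ‖T i P‖ = ‖P‖ → T i P = P := fun i _ hP =>
    (lazy_step_eq_self_iff (hT i) hp.2.ne).2 (lazy_step_invariant_of_norm_eq (hT i) hp hP)
  have hmem : ∀ i, i ∈ List.ofFn ι := fun i => List.mem_ofFn.2 (hι i)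
  have hstrict : ∀ P ∈ (ℝ ∙ u)ᗮ, P ≠ 0 → ‖A P‖ < ‖P‖ := by
    intro P hPu hP0
    rw [← hA]
    refine (norm_foldl_le _ hle _ P).lt_of_ne fun heq => hP0 ?_
    have hinv : ∀ s ∈ Set.range g, ∀ w, P (w * s) = P w := by
      rintro _ ⟨i, rfl⟩
      exact (lazy_step_eq_self_iff (hT i) hp.2.ne).1
        (eq_self_of_norm_foldl_eq _ hle hfix _ P heq i (hmem i))
    exact eq_zero_of_const_of_inner_uniform_eq_zero
      (apply_eq_apply_one_of_mul_right_invariant hgen hinv)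
      (Submodule.mem_orthogonal_singleton_iff_inner_left.1 hPu)
  obtain ⟨c, hc, hcA⟩ := exists_lt_one_norm_le_of_norm_lt A _ hstrict
  refine ⟨c, hc, fun P hPu => ?_⟩
  rw [hA]
  exact hcA P (Submodule.mem_orthogonal_singleton_iff_inner_left.2 hPu)

/-- If a finite group `G` is generated by involutions `g₀, …, g_d`, `p ∈ (0,1)`,
`Tᵢ(P) = P·(p·1 + (1-p)·gᵢ)`, and the sequence `ι₁, …, ι_m` of indices contains
every index at least once, then there is `c < 1` with
`‖T_{ι_m} ⋯ T_{ι_1} P‖ ≤ c‖P‖` for every `P` orthogonal to the uniform element. -/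
theorem stmt3 (G : Type) [Group G] [Fintype G] [DecidableEq G]
    (d m : ℕ) (g : Fin (d + 1) → G) (hg : ∀ i, g i * g i = 1)
    (hgen : Subgroup.closure (Set.range g) = ⊤)
    (p : ℝ) (hp : p ∈ Set.Ioo (0 : ℝ) 1)
    (T : Fin (d + 1) → EuclideanSpace ℝ G →ₗ[ℝ] EuclideanSpace ℝ G)
    (hT : ∀ i (P : EuclideanSpace ℝ G) (w : G),
      T i P w = p * P w + (1 - p) * P (w * g i))
    (ι : Fin m → Fin (d + 1)) (hι : Function.Surjective ι) :
    ∃ c : ℝ, c < 1 ∧ ∀ P : EuclideanSpace ℝ G,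
      ⟪P, (WithLp.toLp 2 (fun _ => 1 / (Fintype.card G : ℝ)) : EuclideanSpace ℝ G)⟫ = 0 →
      ‖(List.ofFn ι).foldl (fun Q i => T i Q) P‖ ≤ c * ‖P‖ :=
  stmt3_general G d m g hgen p hp T hT ι hι
end

section
/- Let (X_n)_{n≥0} be random vectors in ℝ^d adapted to a filtration (ℱ_n), and C > 0 a constant with ‖𝔼[X_{k+n₀} | ℱ_{n₀}] − X_{n₀}‖ ≤ C a.s. for all k, n₀. Define f(n) := inf over n₀ of the essential infimum of 𝔼[‖X_{n+n₀} − X_{n₀}‖² | ℱ_{n₀}]. Then for all m, n ≥ 0 with f(m) ≥ C², one has f(n+m) ≥ f(n) + f(m) − 2C·√(f(m)). -/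
/-!
Split `X (n + m + n₀) - X n₀ = Y + Z` at time `m + n₀`. Conditioning on `ℱ (m + n₀)`, where `Y`
is known and `‖𝔼[Z | ℱ (m + n₀)]‖ ≤ C`, gives
`𝔼[‖Y + Z‖² | ℱ (m + n₀)] ≥ ‖Y‖² - 2C‖Y‖ + f n`. For `t = √(f m) ≥ C` the tangent-line bound
`2‖Y‖ ≤ t + ‖Y‖² / t` turns the right-hand side into an affine function of `‖Y‖²` with slope
`1 - C / t ≥ 0`, so conditioning further on `ℱ n₀` and using `𝔼[‖Y‖² | ℱ n₀] ≥ t²` leaves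
`f n + t² - 2Ct`.
-/

open MeasureTheory Filter
open scoped InnerProductSpace

section EssInf

variable {Ω : Type*} {m0 : MeasurableSpace Ω} {μ : Measure Ω} [IsProbabilityMeasure μ]

lemma le_essInf_of_ae_le_of_integrable {g : Ω → ℝ} (hg : Integrable g μ) {c : ℝ}
    (h : ∀ᵐ ω ∂μ, c ≤ g ω) : c ≤ essInf g μ := by
  refine le_essInf_of_ae_le c h ⟨∫ ω, g ω ∂μ, fun a ha => ?_⟩
  simpa using integral_mono_ae (integrable_const a) hg (eventually_map.mp ha)

lemma ae_iInf_essInf_le {ι : Type*} {g : ι → Ω → ℝ} (hg : ∀ i, Integrable (g i) μ)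
    (hg0 : ∀ i, 0 ≤ᵐ[μ] g i) (i : ι) : ∀ᵐ ω ∂μ, ⨅ j, essInf (g j) μ ≤ g i ω := by
  have hbdd : BddBelow (Set.range fun j => essInf (g j) μ) := by
    refine ⟨0, ?_⟩
    rintro _ ⟨j, rfl⟩
    exact le_essInf_of_ae_le_of_integrable (hg j) (hg0 j)
  filter_upwards [ae_essInf_le (hf := ⟨0, eventually_map.mpr (hg0 i)⟩)] with ω hω
  exact (ciInf_le hbdd i).trans hω

end EssInf

section CondExp

variable {Ω : Type*} {m m' m0 : MeasurableSpace Ω} {μ : Measure Ω} [IsFiniteMeasure μ]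

lemma condExp_sub_of_stronglyMeasurable_right {F : Type*} [NormedAddCommGroup F]
    [NormedSpace ℝ F] [CompleteSpace F] (hm : m ≤ m0) {U V : Ω → F} (hU : Integrable U μ)
    (hV : Integrable V μ) (hVm : StronglyMeasurable[m] V) :
    μ[U - V | m] =ᵐ[μ] μ[U | m] - V := by
  have h := condExp_sub hU hV m
  rwa [condExp_of_stronglyMeasurable hm hVm hV] at h

lemma condExp_mul_add_const (hm : m ≤ m0) {g : Ω → ℝ} (hg : Integrable g μ) (a b : ℝ) :
    μ[fun ω => a * g ω + b | m] =ᵐ[μ] fun ω => a * μ[g | m] ω + b :=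
  ((ContinuousLinearMap.mul ℝ ℝ a).comp_condExp_add_const_comm hm hg b).symm

lemma condExp_mono_of_le_condExp (hmm' : m ≤ m') (hm' : m' ≤ m0) {g h : Ω → ℝ}
    (hh : Integrable h μ) (hle : h ≤ᵐ[μ] μ[g | m']) : μ[h | m] ≤ᵐ[μ] μ[g | m] :=
  (condExp_mono hh integrable_condExp hle).trans_eq (condExp_condExp_of_le hmm' hm')

end CondExp

section InnerProductSpace

variable {E : Type*} [NormedAddCommGroup E] [InnerProductSpace ℝ E]

lemma le_norm_sq_add_two_inner {C t : ℝ} (ht : 0 < t) (y : E) {w : E} (hw : ‖w‖ ≤ C) :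
    (1 - C / t) * ‖y‖ ^ 2 - C * t ≤ ‖y‖ ^ 2 + 2 * ⟪y, w⟫_ℝ := by
  have hinner : -(‖y‖ * C) ≤ ⟪y, w⟫_ℝ :=
    (neg_le_neg (mul_le_mul_of_nonneg_left hw (norm_nonneg y))).trans
      (neg_le_of_abs_le (abs_real_inner_le_norm y w))
  have hsq : 0 ≤ C / t * (t - ‖y‖) ^ 2 :=
    mul_nonneg (div_nonneg ((norm_nonneg w).trans hw) ht.le) (sq_nonneg _)
  have hexpand : C / t * (t - ‖y‖) ^ 2 = C * t - 2 * (‖y‖ * C) + C / t * ‖y‖ ^ 2 := by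
    field_simp
    ring
  linarith

variable {Ω : Type*} {m m' m0 : MeasurableSpace Ω} {μ : Measure Ω}

lemma integrable_inner_of_memLp_two {Y Z : Ω → E} (hY : MemLp Y 2 μ) (hZ : MemLp Z 2 μ) :
    Integrable (fun ω => ⟪Y ω, Z ω⟫_ℝ) μ := by
  refine (L2.integrable_inner (𝕜 := ℝ) (hY.toLp Y) (hZ.toLp Z)).congr ?_
  filter_upwards [hY.coeFn_toLp, hZ.coeFn_toLp] with ω hYω hZω
  rw [hYω, hZω]

variable [CompleteSpace E] [IsFiniteMeasure μ]

lemma condExp_inner_of_stronglyMeasurable_left {Y Z : Ω → E} (hYm : StronglyMeasurable[m] Y)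
    (hY : MemLp Y 2 μ) (hZ : MemLp Z 2 μ) :
    μ[fun ω => ⟪Y ω, Z ω⟫_ℝ | m] =ᵐ[μ] fun ω => ⟪Y ω, μ[Z | m] ω⟫_ℝ :=
  condExp_bilin_of_aestronglyMeasurable_left (innerSL ℝ) hYm.aestronglyMeasurable
    (integrable_inner_of_memLp_two hY hZ) (hZ.integrable one_le_two)

lemma condExp_norm_add_sq_of_stronglyMeasurable_left (hm : m ≤ m0) {Y Z : Ω → E}
    (hYm : StronglyMeasurable[m] Y) (hY : MemLp Y 2 μ) (hZ : MemLp Z 2 μ) :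
    μ[fun ω => ‖Y ω + Z ω‖ ^ 2 | m] =ᵐ[μ]
      fun ω => ‖Y ω‖ ^ 2 + 2 * ⟪Y ω, μ[Z | m] ω⟫_ℝ + μ[fun ω => ‖Z ω‖ ^ 2 | m] ω := by
  have hY2 := hY.integrable_norm_pow two_ne_zero
  have hZ2 := hZ.integrable_norm_pow two_ne_zero
  have hYZ := (integrable_inner_of_memLp_two hY hZ).smul (2 : ℝ)
  have hsplit : (fun ω => ‖Y ω + Z ω‖ ^ 2) = (fun ω => ‖Y ω‖ ^ 2) +
      (((2 : ℝ) • fun ω => ⟪Y ω, Z ω⟫_ℝ) + fun ω => ‖Z ω‖ ^ 2) := by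
    funext ω
    simp only [Pi.add_apply, Pi.smul_apply, smul_eq_mul, norm_add_sq_real]
    ring
  have hYY : μ[fun ω => ‖Y ω‖ ^ 2 | m] = fun ω => ‖Y ω‖ ^ 2 :=
    condExp_of_stronglyMeasurable hm (hYm.norm.pow 2) hY2
  rw [hsplit]
  filter_upwards [condExp_add hY2 (hYZ.add hZ2) m, condExp_add hYZ hZ2 m,
    condExp_smul (2 : ℝ) (fun ω => ⟪Y ω, Z ω⟫_ℝ) m,
    condExp_inner_of_stronglyMeasurable_left hYm hY hZ] with ω h1 h2 h3 h4
  simp only [Pi.add_apply, Pi.smul_apply, smul_eq_mul] at h1 h2 h3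
  rw [h1, h2, h3, h4, hYY, add_assoc]

lemma ae_le_condExp_norm_add_sq (hmm' : m ≤ m') (hm' : m' ≤ m0) {Y Z : Ω → E}
    (hYm : StronglyMeasurable[m'] Y) (hY : MemLp Y 2 μ) (hZ : MemLp Z 2 μ) {C t a : ℝ}
    (ht : 0 < t) (hCt : C ≤ t) (hZdrift : ∀ᵐ ω ∂μ, ‖μ[Z | m'] ω‖ ≤ C)
    (hZsq : ∀ᵐ ω ∂μ, a ≤ μ[fun ω => ‖Z ω‖ ^ 2 | m'] ω)
    (hYsq : ∀ᵐ ω ∂μ, t ^ 2 ≤ μ[fun ω => ‖Y ω‖ ^ 2 | m] ω) :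
    ∀ᵐ ω ∂μ, a + t ^ 2 - 2 * C * t ≤ μ[fun ω => ‖Y ω + Z ω‖ ^ 2 | m] ω := by
  have hY2 := hY.integrable_norm_pow two_ne_zero
  have hlow : (fun ω => (1 - C / t) * ‖Y ω‖ ^ 2 + (a - C * t)) ≤ᵐ[μ]
      μ[fun ω => ‖Y ω + Z ω‖ ^ 2 | m'] := by
    filter_upwards [condExp_norm_add_sq_of_stronglyMeasurable_left hm' hYm hY hZ, hZdrift, hZsq]
      with ω h1 h2 h3
    rw [h1]
    linarith [le_norm_sq_add_two_inner ht (Y ω) h2]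
  have hlow_int : Integrable (fun ω => (1 - C / t) * ‖Y ω‖ ^ 2 + (a - C * t)) μ :=
    (hY2.const_mul _).add (integrable_const _)
  filter_upwards [condExp_mono_of_le_condExp hmm' hm' hlow_int hlow,
    condExp_mul_add_const (hmm'.trans hm') hY2 (1 - C / t) (a - C * t), hYsq] with ω h1 h2 h3
  rw [h2] at h1
  have hmono : (1 - C / t) * t ^ 2 ≤ (1 - C / t) * μ[fun ω => ‖Y ω‖ ^ 2 | m] ω :=
    mul_le_mul_of_nonneg_left h3 (sub_nonneg.2 ((div_le_one ht).2 hCt))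
  have heq : (1 - C / t) * t ^ 2 = t ^ 2 - C * t := by
    field_simp
  linarith

end InnerProductSpace

/-- Superadditivity-type growth of the conditional second moment for an
almost-martingale: with `f(n) := inf_{n₀} essinf 𝔼[‖X_{n+n₀} − X_{n₀}‖² | ℱ_{n₀}]`,
if `f(m) ≥ C²` then `f(n+m) ≥ f(n) + f(m) − 2C√(f(m))`. -/
theorem stmt9 {Ω : Type} {m0 : MeasurableSpace Ω} (μ : Measure Ω)
    [IsProbabilityMeasure μ] (d : ℕ) (ℱ : Filtration ℕ m0)
    (X : ℕ → Ω → EuclideanSpace ℝ (Fin d))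
    (hadapt : StronglyAdapted ℱ X) (hint : ∀ n, Integrable (X n) μ)
    (hint2 : ∀ n, MemLp (X n) 2 μ)
    (C : ℝ) (hC : 0 < C)
    (hmart : ∀ k n₀, ∀ᵐ ω ∂μ, ‖(μ[X (k + n₀) | ℱ n₀]) ω - X n₀ ω‖ ≤ C)
    (f : ℕ → ℝ)
    (hf : ∀ n, f n = ⨅ n₀ : ℕ,
      essInf (μ[(fun ω => ‖X (n + n₀) ω - X n₀ ω‖ ^ 2) | ℱ n₀]) μ) :
    ∀ m n : ℕ, C ^ 2 ≤ f m →
      f n + f m - 2 * C * Real.sqrt (f m) ≤ f (n + m) := by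
  have hfae (k n₀ : ℕ) : ∀ᵐ ω ∂μ, f k ≤ μ[fun ω => ‖X (k + n₀) ω - X n₀ ω‖ ^ 2 | ℱ n₀] ω := by
    rw [hf k]
    exact ae_iInf_essInf_le (fun _ => integrable_condExp)
      (fun _ => condExp_nonneg (ae_of_all _ fun _ => sq_nonneg _)) n₀
  intro m n hfm
  have hCt : C ≤ √(f m) := (Real.le_sqrt' hC).2 hfm
  have hsq : √(f m) ^ 2 = f m := Real.sq_sqrt ((sq_nonneg C).trans hfm)
  rw [hf (n + m)]
  refine le_ciInf fun n₀ => le_essInf_of_ae_le_of_integrable integrable_condExp ?_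
  have hle : ℱ n₀ ≤ ℱ (m + n₀) := ℱ.mono (Nat.le_add_left n₀ m)
  have hdrift : ∀ᵐ ω ∂μ, ‖μ[X (n + m + n₀) - X (m + n₀) | ℱ (m + n₀)] ω‖ ≤ C := by
    filter_upwards [add_assoc n m n₀ ▸ hmart n (m + n₀), condExp_sub_of_stronglyMeasurable_right
      (ℱ.le _) (hint _) (hint _) (hadapt _)] with ω hω hsub
    rwa [hsub]
  filter_upwards [ae_le_condExp_norm_add_sq (Y := fun ω => X (m + n₀) ω - X n₀ ω)
    (Z := fun ω => X (n + m + n₀) ω - X (m + n₀) ω) hle (ℱ.le _)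
    ((hadapt _).sub ((hadapt n₀).mono hle)) ((hint2 _).sub (hint2 _)) ((hint2 _).sub (hint2 _))
    (hC.trans_le hCt) hCt hdrift (add_assoc n m n₀ ▸ hfae n (m + n₀))
    (by simpa only [hsq] using hfae m n₀)] with ω hω
  simp only [sub_add_sub_cancel', hsq] at hω
  linarith
end
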